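/- Let F₀ be the Kripke frame on worlds {0,1,2,3,4} with accessibility R₀ = {(i,j) ∣ 4 ≥ i ≥ j ≥ 0} ∪ {(0,1)}. There is no formula α(p, r, s) that is positive in p (contains no negated occurrence of p) such that φ(p,r,s) := (◇(¬s ∧ ¬r ∧ ◇(¬s ∧ r ∧ ¬p)) ∧ □(¬s ∧ r → □(¬s ∧ ¬r → □(¬s ∧ r → p)))) ∨ □(¬s ∧ r → p) is equivalent to α at every world of F₀ under every valuation. -/

import Mathlib

/-- Modal formulas in negation normal form. -/
inductive Fm where
  | var : ℕ → Fm
  | nvar : ℕ → Fm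
  | bot : Fm
  | top : Fm
  | and : Fm → Fm → Fm
  | or : Fm → Fm → Fm
  | dia : Fm → Fm
  | box : Fm → Fm

/-- Kripke semantics for formulas in negation normal form. -/
def ksatN {W : Type*} (R : W → W → Prop) (ϑ : ℕ → Set W) : Fm → W → Prop
  | .var n, w => w ∈ ϑ n
  | .nvar n, w => w ∉ ϑ n
  | .bot, _ => False
  | .top, _ => True
  | .and a b, w => ksatN R ϑ a w ∧ ksatN R ϑ b w
  | .or a b, w => ksatN R ϑ a w ∨ ksatN R ϑ b w
  | .dia a, w => ∃ v, R w v ∧ ksatN R ϑ a v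
  | .box a, w => ∀ v, R w v → ksatN R ϑ a v

/-- `φ` is positive in variable `0` (the variable `p`): no occurrence of `¬p`. -/
def posInP : Fm → Prop
  | .var _ => True
  | .nvar n => n ≠ 0
  | .bot => True
  | .top => True
  | .and a b => posInP a ∧ posInP b
  | .or a b => posInP a ∧ posInP b
  | .dia a => posInP a
  | .box a => posInP a

/-- The frame `F₀` on `{0,1,2,3,4}` with `R₀ = {(i,j) ∣ 4 ≥ i ≥ j ≥ 0} ∪ {(0,1)}`. -/
def R0 : Fin 5 → Fin 5 → Prop := fun i j => j ≤ i ∨ (i = 0 ∧ j = 1)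

/-- Truth of the formula
`φ(p,r,s) := (◇(¬s ∧ ¬r ∧ ◇(¬s ∧ r ∧ ¬p)) ∧ □(¬s ∧ r → □(¬s ∧ ¬r → □(¬s ∧ r → p)))) ∨ □(¬s ∧ r → p)`,
with valuations `P`, `Rv`, `S` of the variables `p`, `r`, `s`. -/
def phiTrue {W : Type*} (R : W → W → Prop) (P Rv S : Set W) (w : W) : Prop :=
  ((∃ v, R w v ∧ v ∉ S ∧ v ∉ Rv ∧ ∃ u, R v u ∧ u ∉ S ∧ u ∈ Rv ∧ u ∉ P) ∧
   (∀ v, R w v → v ∉ S → v ∈ Rv →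
      ∀ u, R v u → u ∉ S → u ∉ Rv →
        ∀ t, R u t → t ∉ S → t ∈ Rv → t ∈ P)) ∨
  (∀ v, R w v → v ∉ S → v ∈ Rv → v ∈ P)


/-! A `p`-positive formula is preserved along every bisimulation that respects all variables other
than `p` and carries truth of `p` only forward. On `F₀`, let `p = {0}` and `r = {0, 2}`, and let
`s = {4}` in one model and `s = {3}` in the other; the relation
`{(0,0), (1,1), (2,0), (2,2), (3,1), (4,3)}` is such a bisimulation from the first model to the
second. But `φ` holds at `4` in the first model, with witnesses `3` and `2` for its diamonds, while
at `3` in the second model the only candidate for the outer diamond is `1`, and `2` refutes the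
second disjunct. -/

structure IsPosBisimulation {W W' : Type*} (R : W → W → Prop) (R' : W' → W' → Prop)
    (ϑ : ℕ → Set W) (ϑ' : ℕ → Set W') (Z : W → W' → Prop) : Prop where
  mem_zero : ∀ ⦃w w'⦄, Z w w' → w ∈ ϑ 0 → w' ∈ ϑ' 0
  mem_iff : ∀ ⦃n⦄, n ≠ 0 → ∀ ⦃w w'⦄, Z w w' → (w ∈ ϑ n ↔ w' ∈ ϑ' n)
  forth : ∀ ⦃w w'⦄, Z w w' → ∀ ⦃v⦄, R w v → ∃ v', R' w' v' ∧ Z v v'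
  back : ∀ ⦃w w'⦄, Z w w' → ∀ ⦃v'⦄, R' w' v' → ∃ v, R w v ∧ Z v v'

theorem IsPosBisimulation.ksatN_of_posInP {W W' : Type*} {R : W → W → Prop}
    {R' : W' → W' → Prop} {ϑ : ℕ → Set W} {ϑ' : ℕ → Set W'} {Z : W → W' → Prop}
    (hZ : IsPosBisimulation R R' ϑ ϑ' Z) {α : Fm} (hα : posInP α) {w : W} {w' : W'}
    (hw : Z w w') (h : ksatN R ϑ α w) : ksatN R' ϑ' α w' := by
  induction α generalizing w w' with
  | var n =>
    rcases eq_or_ne n 0 with rfl | hn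
    · exact hZ.mem_zero hw h
    · exact (hZ.mem_iff hn hw).mp h
  | nvar n => exact fun h' => h ((hZ.mem_iff hα hw).mpr h')
  | bot => exact h
  | top => trivial
  | and a b iha ihb => exact ⟨iha hα.1 hw h.1, ihb hα.2 hw h.2⟩
  | or a b iha ihb => exact h.imp (iha hα.1 hw) (ihb hα.2 hw)
  | dia a ih =>
    obtain ⟨v, hwv, hv⟩ := h
    obtain ⟨v', hwv', hvv'⟩ := hZ.forth hw hwv
    exact ⟨v', hwv', ih hα hvv' hv⟩
  | box a ih =>
    intro v' hwv'
    obtain ⟨v, hwv, hvv'⟩ := hZ.back hw hwv'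
    exact ih hα hvv' (h v hwv)

instance : DecidableRel R0 := fun i j => inferInstanceAs (Decidable (j ≤ i ∨ (i = 0 ∧ j = 1)))

def valS (x : Fin 5) : ℕ → Set (Fin 5)
  | 0 => {0}
  | 1 => {0, 2}
  | 2 => {x}
  | _ => ∅

def simF0 : Finset (Fin 5 × Fin 5) := {(0, 0), (1, 1), (2, 0), (2, 2), (3, 1), (4, 3)}

theorem isPosBisimulation_simF0 :
    IsPosBisimulation R0 R0 (valS 4) (valS 3) (fun w w' => (w, w') ∈ simF0) where
  mem_zero := by simp only [valS, Set.mem_singleton_iff]; decide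
  mem_iff
    | 1, _ => by simp only [valS, Set.mem_singleton_iff, Set.mem_insert_iff]; decide
    | 2, _ => by simp only [valS, Set.mem_singleton_iff]; decide
    | _ + 3, _ => by simp [valS]
  forth := by decide
  back := by decide

theorem phiTrue_valS_four : phiTrue R0 (valS 4 0) (valS 4 1) (valS 4 2) 4 := by
  refine .inl ⟨⟨3, by decide, ?_⟩, ?_⟩
  all_goals simp only [valS, Set.mem_singleton_iff, Set.mem_insert_iff]
  · exact ⟨by decide, by decide, 2, by decide⟩
  · decide

theorem not_phiTrue_valS_three : ¬ phiTrue R0 (valS 3 0) (valS 3 1) (valS 3 2) 3 := by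
  simp only [phiTrue, valS, Set.mem_singleton_iff, Set.mem_insert_iff]
  rintro (⟨⟨v, hv⟩, -⟩ | h)
  · revert v hv; decide
  · exact absurd (h 2 (by decide) (by decide) (by decide)) (by decide)

/-- There is no `p`-positive formula equivalent to `φ(p,r,s)` on the frame `F₀`
(variables: `p` is variable `0`, `r` is variable `1`, `s` is variable `2`). -/
theorem no_p_positive_equivalent_on_F0 :
    ¬ ∃ α : Fm, posInP α ∧
      ∀ (ϑ : ℕ → Set (Fin 5)) (w : Fin 5),
        phiTrue R0 (ϑ 0) (ϑ 1) (ϑ 2) w ↔ ksatN R0 ϑ α w := by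
  rintro ⟨α, hα, hequiv⟩
  have h4 : ksatN R0 (valS 4) α 4 := (hequiv (valS 4) 4).mp phiTrue_valS_four
  have h3 : ksatN R0 (valS 3) α 3 := isPosBisimulation_simF0.ksatN_of_posInP hα (by decide) h4
  exact not_phiTrue_valS_three ((hequiv (valS 3) 3).mpr h3)
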